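/- arXiv:1503.02705 — 2 statements merged into one kernel-verified Lean document; each statement's English description precedes it below -/
import Mathlib

section
/- The proposed market clearing realizes the team optimal solution: if the clearing outcome (a*, P_c*) satisfies a_i* = h_i(P_c*) for all i, P* = C'(∑_{i=1}^N a_i*), P_c* = max{P̄, P*}, and ∑_{i=1}^N h_i(P̄) = D, then a* = (a_1*, …, a_N*) is an optimal solution of the team problem; that is, for every allocation (a_1, …, a_N) with 0 ≤ a_i ≤ E_i for all i and ∑_{i=1}^N a_i ≤ D, one has ∑_{i=1}^N V_i(a_i) − C(∑_{i=1}^N a_i) ≤ ∑_{i=1}^N V_i(a_i*) − C(∑_{i=1}^N a_i*). -/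
/-- Tangent line lies below a convex differentiable function. -/
lemma tangent_le_of_convex {C : ℝ → ℝ} (hCconv : ConvexOn ℝ Set.univ C)
    (hCdiff : Differentiable ℝ C) (x y : ℝ) :
    deriv C x * (y - x) ≤ C y - C x := by
  rcases lt_trichotomy x y with hxy | hxy | hxy
  · have h' := hCconv.deriv_le_slope (Set.mem_univ x) (Set.mem_univ y) hxy (hCdiff x)
    rw [slope_def_field] at h'
    exact (le_div_iff₀ (sub_pos.2 hxy)).mp h'
  · simp [hxy]
  · have hpos : 0 < x - y := sub_pos.2 hxy
    have h' := hCconv.slope_le_deriv (Set.mem_univ y) (Set.mem_univ x) hxy (hCdiff x)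
    rw [slope_def_field] at h'
    have : C x - C y ≤ deriv C x * (x - y) := by
      calc C x - C y = ((C x - C y) / (x - y)) * (x - y) := by field_simp
        _ ≤ deriv C x * (x - y) := mul_le_mul_of_nonneg_right h' hpos.le
    nlinarith

/-- The proposed market clearing realizes the team optimal solution:
if the clearing outcome `(a*, Pc*)` satisfies `a* i = h i Pc*` for all `i`,
`P* = C'(∑ i, a* i)`, `Pc* = max Pbar P*`, and `∑ i, h i Pbar = D`, then `a*` is an
optimal solution of the team problem. -/
theorem market_clearing_realizes_team_optimum
    (N : ℕ) (V : Fin N → ℝ → ℝ) (E : Fin N → ℝ) (h : Fin N → ℝ → ℝ)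
    (C : ℝ → ℝ) (D Pbar Pstar Pc : ℝ) (astar : Fin N → ℝ)
    (hVconc : ∀ i, ConcaveOn ℝ Set.univ (V i))
    (hVdiff : ∀ i, Differentiable ℝ (V i))
    (hV0 : ∀ i, V i 0 = 0)
    (hV'pos : ∀ i, 0 < deriv (V i) 0)
    (hE : ∀ i, 0 < E i)
    (hargmax : ∀ i P, h i P ∈ Set.Icc (0 : ℝ) (E i) ∧
      ∀ a ∈ Set.Icc (0 : ℝ) (E i), V i a - P * a ≤ V i (h i P) - P * h i P)
    (hcont : ∀ i, Continuous (h i))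
    (hanti : ∀ i, Antitone (h i))
    (hCconv : ConvexOn ℝ Set.univ C)
    (hCdiff : Differentiable ℝ C)
    (hD : 0 < D) (hDle : D ≤ ∑ i, E i)
    (hclear : ∀ i, astar i = h i Pc)
    (hPstar : Pstar = deriv C (∑ i, astar i))
    (hPc : Pc = max Pbar Pstar)
    (hPbar : ∑ i, h i Pbar = D) :
    ∀ a : Fin N → ℝ, (∀ i, a i ∈ Set.Icc (0 : ℝ) (E i)) → (∑ i, a i) ≤ D →
      ∑ i, V i (a i) - C (∑ i, a i) ≤ ∑ i, V i (astar i) - C (∑ i, astar i) := by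
  intro a ha haD
  set S := ∑ i, a i with hS
  set Ss := ∑ i, astar i with hSs
  -- each astar i maximizes V i · - Pc ·
  have h1 : (∑ i, V i (a i)) - Pc * S ≤ (∑ i, V i (astar i)) - Pc * Ss := by
    have key : ∀ i ∈ Finset.univ, V i (a i) - Pc * a i ≤ V i (astar i) - Pc * astar i := by
      intro i _
      rw [hclear i]
      exact (hargmax i Pc).2 (a i) (ha i)
    have := Finset.sum_le_sum key
    rw [Finset.sum_sub_distrib, Finset.sum_sub_distrib, ← Finset.mul_sum, ← Finset.mul_sum] at this
    exact this
  have h2 : Pstar * (S - Ss) ≤ C S - C Ss := by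
    rw [hPstar]
    exact tangent_le_of_convex hCconv hCdiff Ss S
  have h3 : Pc * (S - Ss) ≤ Pstar * (S - Ss) := by
    rcases le_or_gt Pbar Pstar with hc | hc
    · rw [hPc, max_eq_right hc]
    · have hPcb : Pc = Pbar := by rw [hPc, max_eq_left hc.le]
      have hSsD : Ss = D := by
        rw [hSs, ← hPbar]
        exact Finset.sum_congr rfl fun i _ => by rw [hclear i, hPcb]
      have hdiff : S - Ss ≤ 0 := by rw [hSsD]; linarith
      have hle : Pstar ≤ Pc := hPc ▸ le_max_right _ _
      nlinarith
  linarith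
end

section
/- Under the market clearing equations, the clearing price behaves as a Lagrange multiplier with complementary slackness: if a_i* = h_i(P_c*) for all i, P* = C'(∑_{i=1}^N a_i*), P_c* = max{P̄, P*}, and ∑_{i=1}^N h_i(P̄) = D, then P_c* ≥ C'(∑_{i=1}^N a_i*), and moreover if ∑_{i=1}^N a_i* < D then P_c* = C'(∑_{i=1}^N a_i*); equivalently, setting u = P_c* − C'(∑_{i=1}^N a_i*), one has u ≥ 0 and u·(D − ∑_{i=1}^N a_i*) = 0. -/
/-- Under the market clearing equations, the clearing price behaves as a
Lagrange multiplier with complementary slackness: `Pc* ≥ C'(∑ i, a* i)`; if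
`∑ i, a* i < D` then `Pc* = C'(∑ i, a* i)`; equivalently, with
`u = Pc* - C'(∑ i, a* i)`, one has `u ≥ 0` and `u * (D - ∑ i, a* i) = 0`. -/
theorem clearing_price_complementary_slackness
    (N : ℕ) (E : Fin N → ℝ) (h : Fin N → ℝ → ℝ) (C : ℝ → ℝ)
    (D Pbar Pstar Pc : ℝ) (astar : Fin N → ℝ)
    (hcont : ∀ i, Continuous (h i))
    (hanti : ∀ i, Antitone (h i))
    (hE : ∀ i, 0 < E i)
    (hrange : ∀ i P, h i P ∈ Set.Icc (0 : ℝ) (E i))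
    (hCconv : ConvexOn ℝ Set.univ C)
    (hCdiff : Differentiable ℝ C)
    (hD : 0 < D)
    (hclear : ∀ i, astar i = h i Pc)
    (hPstar : Pstar = deriv C (∑ i, astar i))
    (hPc : Pc = max Pbar Pstar)
    (hPbar : ∑ i, h i Pbar = D) :
    deriv C (∑ i, astar i) ≤ Pc ∧
    ((∑ i, astar i) < D → Pc = deriv C (∑ i, astar i)) ∧
    0 ≤ Pc - deriv C (∑ i, astar i) ∧
    (Pc - deriv C (∑ i, astar i)) * (D - ∑ i, astar i) = 0 := by
  have h1 : deriv C (∑ i, astar i) ≤ Pc := by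
    rw [hPc, ← hPstar]; exact le_max_right _ _
  have h2 : (∑ i, astar i) < D → Pc = deriv C (∑ i, astar i) := by
    intro hlt
    have hgt : Pbar < Pc := by
      by_contra hle
      push_neg at hle
      have : D ≤ ∑ i, astar i := by
        rw [← hPbar]
        apply Finset.sum_le_sum
        intro i _
        rw [hclear i]
        exact hanti i hle
      linarith
    have : Pc = Pstar := by
      rcases max_cases Pbar Pstar with ⟨he, _⟩ | ⟨he, _⟩
      · rw [hPc] at hgt; rw [he] at hgt; linarith [hgt, hPc ▸ he]
      · rw [hPc, he]
    rw [this, hPstar]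
  refine ⟨h1, h2, by linarith, ?_⟩
  rcases lt_or_ge (∑ i, astar i) D with hlt | hge
  · rw [h2 hlt]; ring
  · have hsum_le : (∑ i, astar i) ≤ D := by
      rw [← hPbar]
      apply Finset.sum_le_sum
      intro i _
      rw [hclear i]
      exact hanti i (by rw [hPc]; exact le_max_left _ _)
    have : (∑ i, astar i) = D := le_antisymm hsum_le hge
    rw [this]; ring
end
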